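/- Let (Ω,T) be a dynamical system and I ⊂ ℝ a compact interval. Define Var_n(A) := sup over E ∈ I and ω, ϱ ∈ Ω of |log‖A_n(E,ω)‖ − log‖A_n(E,ϱ)‖|. Then any A ∈ C(I × Ω, SL(2,R)) with liminf_{n→∞} (1/n) Var_n(A) = 0 has the property that A(E,·) is a uniform cocycle for every E ∈ I. -/

import Mathlib

open scoped Matrix.Norms.L2Operator
open Filter Topology MeasureTheory

noncomputable abbrev SL2 := Matrix.SpecialLinearGroup (Fin 2) ℝ

noncomputable instance : MetricSpace SL2 :=
  MetricSpace.induced (fun B => (B : Matrix (Fin 2) (Fin 2) ℝ))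
    (fun _ _ h => Subtype.ext h) inferInstance

/-- The `n`-step cocycle iterate `A_n(ω) = A(T^{n-1}ω) ⋯ A(ω)`. -/
noncomputable def coc {Ω : Type*} (T : Ω → Ω) (A : Ω → SL2) : ℕ → Ω → SL2
  | 0, _ => 1
  | n + 1, ω => coc T A n (T ω) * A ω

/-- `log ‖A_n(ω)‖`, using the operator norm on 2×2 real matrices. -/
noncomputable def cocNorm {Ω : Type*} (T : Ω → Ω) (A : Ω → SL2) (n : ℕ) (ω : Ω) : ℝ :=
  Real.log ‖(coc T A n ω : Matrix (Fin 2) (Fin 2) ℝ)‖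

/-- Uniform hyperbolicity: `liminf (1/n) log ‖A_n(ω)‖ ≥ L > 0` uniformly in `ω`. -/
def UniformlyHyperbolic {Ω : Type*} (T : Ω → Ω) (A : Ω → SL2) : Prop :=
  ∃ L > (0 : ℝ), ∀ ε > (0 : ℝ), ∃ N : ℕ, ∀ n ≥ N, ∀ ω,
    L - ε < (1 / n : ℝ) * cocNorm T A n ω

/-- `(1/n) log ‖A_n(ω)‖ → L` uniformly in `ω`. -/
def TendsUniformlyToConst {Ω : Type*} (T : Ω → Ω) (A : Ω → SL2) (L : ℝ) : Prop :=
  ∀ ε > (0 : ℝ), ∃ N : ℕ, ∀ n ≥ N, ∀ ω,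
    |(1 / n : ℝ) * cocNorm T A n ω - L| < ε

/-- A uniform cocycle. -/
def IsUniformCocycle {Ω : Type*} (T : Ω → Ω) (A : Ω → SL2) : Prop :=
  ∃ L : ℝ, TendsUniformlyToConst T A L

/-- Uniform behavior: uniformly hyperbolic, or `(1/n) log ‖A_n(ω)‖ → 0` uniformly. -/
def HasUniformBehavior {Ω : Type*} (T : Ω → Ω) (A : Ω → SL2) : Prop :=
  UniformlyHyperbolic T A ∨ TendsUniformlyToConst T A 0

/-!
Fix `E` and write `f n ω = log ‖A_n(E, ω)‖`. Along the cocycle `f` is subadditive, so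
`a n = sup_ω f n ω` is subadditive and `a n / n → L` by Fekete's lemma; this is the uniform upper
bound. For the lower bound only `L > 0` matters. Small variation at a large time `n` forces
`f n ≥ n (L - δ)` everywhere, and subadditivity passes this on to blocks of length `l = n / 2`:
every block has norm at least `exp (l (L - 5δ))`, and two consecutive blocks multiply up to a loss
of at most `exp (5 l δ + C)`. For large blocks in `SL(2, ℝ)` this is the setting of the avalanche
principle, proved here as a cone-invariance statement: the direction most expanded by one block is
kept far from the direction most contracted by the next one. Hence products of `q` blocks have norm
at least `exp (q l (L - 11δ))` uniformly in `ω`, and the leftover piece of length `< l` costs only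
`O(l)`.
-/

open Module Finset
open scoped RealInnerProductSpace

theorem le_one_of_mul_norm_mul_le_norm_mul {R : Type*} [NonUnitalSeminormedRing R] {a b : R}
    {c : ℝ} (ha : 0 < ‖a‖) (hb : 0 < ‖b‖) (h : c * (‖a‖ * ‖b‖) ≤ ‖a * b‖) : c ≤ 1 := by
  have hab : 0 < ‖a‖ * ‖b‖ := mul_pos ha hb
  nlinarith [norm_mul_le a b]

theorem ContinuousLinearMap.exists_norm_eq_one_norm_apply_eq_opNorm {E F : Type*}
    [NormedAddCommGroup E] [NormedSpace ℝ E] [ProperSpace E] [Nontrivial E]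
    [SeminormedAddCommGroup F] [NormedSpace ℝ F] (f : E →L[ℝ] F) :
    ∃ x, ‖x‖ = 1 ∧ ‖f x‖ = ‖f‖ := by
  have hmem := ((isCompact_sphere (0 : E) 1).image
    (by fun_prop : Continuous fun x => ‖f x‖)).sSup_mem
    ((NormedSpace.sphere_nonempty.mpr zero_le_one).image _)
  rw [f.sSup_sphere_eq_norm] at hmem
  obtain ⟨x, hx, hfx⟩ := hmem
  exact ⟨x, mem_sphere_zero_iff_norm.mp hx, hfx⟩

theorem ContinuousLinearMap.det_adjoint {E : Type*} [NormedAddCommGroup E] [InnerProductSpace ℝ E]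
    [FiniteDimensional ℝ E] (f : E →L[ℝ] E) : (adjoint f).det = f.det := by
  let b := stdOrthonormalBasis ℝ E
  rw [ContinuousLinearMap.det, ContinuousLinearMap.det, ← adjoint_toLinearMap,
    ← LinearMap.det_toMatrix b.toBasis, LinearMap.toMatrix_adjoint b b, Matrix.det_conjTranspose,
    LinearMap.det_toMatrix, star_trivial]

section TwoDim

variable {E : Type*} [NormedAddCommGroup E] [InnerProductSpace ℝ E] [Fact (finrank ℝ E = 2)]

attribute [local instance] FiniteDimensional.of_fact_finrank_eq_two

namespace Orientation

variable (o : Orientation ℝ E (Fin 2))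

local notation "ω" => o.areaForm
local notation "J" => o.rightAngleRotation

theorem areaForm_map_eq_det_mul (f : E →L[ℝ] E) (x y : E) :
    ω (f x) (f y) = f.det * ω x y := by
  have hb := o.finOrthonormalBasis_orientation two_pos Fact.out
  rw [o.areaForm_to_volumeForm, o.areaForm_to_volumeForm, o.volumeForm_robust _ hb,
    ContinuousLinearMap.det, ← Basis.det_comp]
  congr 1
  ext i
  fin_cases i <;> rfl

theorem eq_inner_smul_add_areaForm_smul {v : E} (hv : ‖v‖ = 1) (y : E) :
    y = ⟪v, y⟫ • v + ω v y • J v := by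
  refine ext_inner_right ℝ fun z => ?_
  have := o.inner_mul_inner_add_areaForm_mul_areaForm v y z
  rw [hv, one_pow, one_mul] at this
  rw [inner_add_left, real_inner_smul_left, real_inner_smul_left, inner_rightAngleRotation_left,
    this]

theorem norm_apply_mul_opNorm_le (f : E →L[ℝ] E) {v : E} (hv : ‖v‖ = 1)
    (hfv : ‖f v‖ * ‖f‖ ≤ 1) (y : E) : ‖f y‖ * ‖f‖ ≤ ‖y‖ + |ω v y| * ‖f‖ ^ 2 := by
  have hJv : ‖f (J v)‖ ≤ ‖f‖ := by
    simpa [hv] using f.le_opNorm (J v)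
  have hy : ‖f y‖ ≤ ‖y‖ * ‖f v‖ + |ω v y| * ‖f‖ := by
    calc ‖f y‖ = ‖⟪v, y⟫ • f v + ω v y • f (J v)‖ := by
          conv_lhs => rw [o.eq_inner_smul_add_areaForm_smul hv y]
          rw [map_add, map_smul, map_smul]
      _ ≤ |⟪v, y⟫| * ‖f v‖ + |ω v y| * ‖f (J v)‖ := by
          refine (norm_add_le _ _).trans_eq ?_
          rw [norm_smul, norm_smul, Real.norm_eq_abs, Real.norm_eq_abs]
      _ ≤ ‖y‖ * ‖f v‖ + |ω v y| * ‖f‖ := by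
          gcongr
          simpa [hv] using abs_real_inner_le_norm v y
  nlinarith [mul_le_mul_of_nonneg_right hy (norm_nonneg f),
    mul_le_mul_of_nonneg_left hfv (norm_nonneg y)]

theorem abs_areaForm_mul_opNorm_le (f : E →L[ℝ] E) (hf : f.det = 1) {v : E}
    (hfv : ‖f v‖ * ‖f‖ ≤ 1) (y : E) : |ω v y| * ‖f‖ ≤ ‖f y‖ := by
  have h := o.abs_areaForm_le (f v) (f y)
  rw [o.areaForm_map_eq_det_mul, hf, one_mul] at h
  nlinarith [mul_le_mul_of_nonneg_right h (norm_nonneg f), norm_nonneg (f y)]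

theorem apply_rightAngleRotation_adjoint (f : E →L[ℝ] E) (hf : f.det = 1) (u : E) :
    f (J (ContinuousLinearMap.adjoint f u)) = J u := by
  refine ext_inner_right ℝ fun z => ?_
  rw [← ContinuousLinearMap.adjoint_inner_right, inner_rightAngleRotation_left,
    inner_rightAngleRotation_left, o.areaForm_map_eq_det_mul, ContinuousLinearMap.det_adjoint, hf,
    one_mul]

theorem abs_inner_ge_of_abs_areaForm_le {a b : E} {t : ℝ} (ht : |ω a b| ≤ t)
    (h3 : 3 * t ≤ ‖a‖ * ‖b‖) : 9 / 10 * (‖a‖ * ‖b‖) ≤ |⟪a, b⟫| := by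
  have hlag := o.inner_sq_add_areaForm_sq a b
  have ht0 : 0 ≤ t := (abs_nonneg _).trans ht
  have hω : ω a b ^ 2 ≤ t ^ 2 := by
    rw [← sq_abs]; exact pow_le_pow_left₀ (abs_nonneg _) ht 2
  have hab : 0 ≤ ‖a‖ * ‖b‖ := by positivity
  rw [← sq_abs] at hlag
  refine (sq_le_sq₀ (by positivity) (abs_nonneg _)).mp ?_
  nlinarith

theorem abs_areaForm_mul_abs_inner_sub_le {v : E} (hv : ‖v‖ = 1) (a b : E) :
    |ω v a| * |⟪a, b⟫| - ‖a‖ * |ω a b| ≤ ‖a‖ ^ 2 * |ω v b| := by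
  have habs := abs_sub_abs_le_abs_sub (ω a v * ⟪a, b⟫) (⟪a, v⟫ * ω a b)
  rw [abs_sub_comm, o.inner_mul_areaForm_sub a v b, o.areaForm_swap a v] at habs
  simp only [abs_mul, abs_pow, abs_norm, abs_neg] at habs
  have hav : |⟪a, v⟫| ≤ ‖a‖ := by simpa [hv] using abs_real_inner_le_norm a v
  nlinarith [mul_le_mul_of_nonneg_right hav (abs_nonneg (ω a b))]

theorem abs_areaForm_apply_ge_of_transverse {g : E →L[ℝ] E} (hg : g.det = 1) {c : ℝ} (hc : 0 < c)
    (hgc : 12 ≤ c ^ 2 * ‖g‖ ^ 2) {v w x : E} (hv : ‖v‖ = 1) (hw : ‖w‖ = 1)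
    (hgw : c * ‖g‖ ≤ ‖g w‖) (hvgw : 11 / 12 * (c * ‖g‖) ≤ |ω v (g w)|)
    (hx : c / 4 * (‖g‖ * ‖x‖) ≤ ‖g x‖) : c / 4 * ‖g x‖ ≤ |ω v (g x)| := by
  have hGa : ‖g w‖ ≤ ‖g‖ := by simpa [hw] using g.le_opNorm w
  have hG0 : 0 < ‖g w‖ := lt_of_lt_of_le (by nlinarith [mul_nonneg hc.le (norm_nonneg g)]) hgw
  have hxZ : 3 * ‖x‖ ≤ c * ‖g‖ * ‖g x‖ := by
    nlinarith [mul_le_mul_of_nonneg_left hx (by positivity : 0 ≤ c * ‖g‖),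
      mul_le_mul_of_nonneg_right hgc (norm_nonneg x)]
  have hwx : |ω (g w) (g x)| ≤ ‖x‖ := by
    rw [o.areaForm_map_eq_det_mul, hg, one_mul]
    simpa [hw] using o.abs_areaForm_le w x
  -- `g` maps the whole cone into a thin cone around `g w`
  have halign : 9 / 10 * (‖g w‖ * ‖g x‖) ≤ |⟪g w, g x⟫| :=
    o.abs_inner_ge_of_abs_areaForm_le hwx
      (by nlinarith [mul_le_mul_of_nonneg_right hgw (norm_nonneg (g x))])
  have hkey := o.abs_areaForm_mul_abs_inner_sub_le hv (g w) (g x)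
  refine le_of_mul_le_mul_left ?_ (pow_pos hG0 2)
  have h1 := mul_le_mul hvgw halign (by positivity) (abs_nonneg _)
  have h2 := mul_le_mul_of_nonneg_left hxZ hG0.le
  have h3 := mul_le_mul_of_nonneg_left hGa (by positivity : 0 ≤ c * ‖g w‖ * ‖g x‖)
  have h4 := mul_le_mul_of_nonneg_left hwx hG0.le
  have h5 : 0 ≤ c * ‖g w‖ ^ 2 * ‖g x‖ := by positivity
  linarith

end Orientation

namespace ContinuousLinearMap

variable {f : E →L[ℝ] E}

theorem one_le_norm_of_det_eq_one (hf : f.det = 1) : 1 ≤ ‖f‖ := by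
  let o : Orientation ℝ E (Fin 2) := (finBasisOfFinrankEq ℝ E Fact.out).orientation
  have : Nontrivial E := nontrivial_of_finrank_eq_succ (Fact.out : finrank ℝ E = 2)
  obtain ⟨x, hx⟩ := exists_norm_eq E zero_le_one
  have hJx : ‖f (o.rightAngleRotation x)‖ ≤ ‖f‖ := by
    simpa [hx] using f.le_opNorm (o.rightAngleRotation x)
  have hfx : ‖f x‖ ≤ ‖f‖ := by simpa [hx] using f.le_opNorm x
  have h := o.abs_areaForm_le (f x) (f (o.rightAngleRotation x))
  rw [o.areaForm_map_eq_det_mul, hf, one_mul, o.areaForm_rightAngleRotation_right,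
    real_inner_self_eq_norm_sq, hx, one_pow, abs_one] at h
  nlinarith [mul_le_mul hfx hJx (norm_nonneg _) (norm_nonneg f), norm_nonneg f]

theorem exists_norm_eq_one_norm_apply_mul_norm_eq_one (hf : f.det = 1) :
    ∃ v, ‖v‖ = 1 ∧ ‖f v‖ * ‖f‖ = 1 := by
  let o : Orientation ℝ E (Fin 2) := (finBasisOfFinrankEq ℝ E Fact.out).orientation
  have : Nontrivial E := nontrivial_of_finrank_eq_succ (Fact.out : finrank ℝ E = 2)
  have hf0 : ‖f‖ ≠ 0 := (zero_lt_one.trans_le (one_le_norm_of_det_eq_one hf)).ne'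
  obtain ⟨u, hu, hfu⟩ := (adjoint f).exists_norm_eq_one_norm_apply_eq_opNorm
  rw [LinearIsometryEquiv.norm_map] at hfu
  -- `f ∘ J ∘ f† = J` when `det f = 1`, so `J (f† u)` is shrunk by `f` by the factor `‖f† u‖ = ‖f‖`
  refine ⟨‖f‖⁻¹ • o.rightAngleRotation (adjoint f u), ?_, ?_⟩
  · rw [norm_smul, LinearIsometryEquiv.norm_map, hfu, norm_inv, norm_norm, inv_mul_cancel₀ hf0]
  · rw [map_smul, o.apply_rightAngleRotation_adjoint f hf, norm_smul, LinearIsometryEquiv.norm_map,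
      hu, mul_one, norm_inv, norm_norm, inv_mul_cancel₀ hf0]

theorem norm_apply_apply_ge_of_junction {g h : E →L[ℝ] E} {c : ℝ} (hc : 0 < c)
    (hg : g.det = 1) (hh : h.det = 1) (hgc : 12 ≤ c ^ 2 * ‖g‖ ^ 2) (hhc : 12 ≤ c ^ 2 * ‖h‖ ^ 2)
    (hj : c * (‖h‖ * ‖g‖) ≤ ‖h * g‖) {x : E} (hx : c / 4 * (‖g‖ * ‖x‖) ≤ ‖g x‖) :
    c / 4 * (‖h‖ * ‖g x‖) ≤ ‖h (g x)‖ := by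
  let o : Orientation ℝ E (Fin 2) := (finBasisOfFinrankEq ℝ E Fact.out).orientation
  have : Nontrivial E := nontrivial_of_finrank_eq_succ (Fact.out : finrank ℝ E = 2)
  have hg1 := one_le_norm_of_det_eq_one hg
  have hh1 := one_le_norm_of_det_eq_one hh
  have hc1 : c ≤ 1 := le_one_of_mul_norm_mul_le_norm_mul (by positivity) (by positivity) hj
  obtain ⟨v, hv, hhv⟩ := exists_norm_eq_one_norm_apply_mul_norm_eq_one hh
  obtain ⟨w, hw, hhgw⟩ := (h * g).exists_norm_eq_one_norm_apply_eq_opNorm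
  rw [mul_apply_eq_comp] at hhgw
  have hgw : c * ‖g‖ ≤ ‖g w‖ := by
    refine le_of_mul_le_mul_left ?_ (zero_lt_one.trans_le hh1)
    nlinarith [h.le_opNorm (g w)]
  -- `v` is the direction contracted by `h`, so `g w`, which `h` expands fully, stays away from it
  have hvgw : 11 / 12 * (c * ‖g‖) ≤ |o.areaForm v (g w)| := by
    have hcontr := o.norm_apply_mul_opNorm_le h hv hhv.le (g w)
    have hGa : ‖g w‖ ≤ ‖g‖ := by simpa [hw] using g.le_opNorm w
    have hjw : c * (‖h‖ * ‖g‖) * ‖h‖ ≤ ‖h (g w)‖ * ‖h‖ :=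
      mul_le_mul_of_nonneg_right (hj.trans hhgw.ge) (norm_nonneg h)
    have hchh : 12 ≤ c * ‖h‖ ^ 2 := by nlinarith
    refine le_of_mul_le_mul_right ?_ (by positivity : 0 < ‖h‖ ^ 2)
    nlinarith [mul_le_mul_of_nonneg_right hchh (norm_nonneg g)]
  have hfar := o.abs_areaForm_apply_ge_of_transverse hg hc hgc hv hw hgw hvgw hx
  calc c / 4 * (‖h‖ * ‖g x‖) = c / 4 * ‖g x‖ * ‖h‖ := by ring
    _ ≤ |o.areaForm v (g x)| * ‖h‖ := by gcongr
    _ ≤ ‖h (g x)‖ := o.abs_areaForm_mul_opNorm_le h hh hhv.le (g x)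

theorem pow_mul_prod_norm_le_norm_of_junction {G P : ℕ → E →L[ℝ] E} {c : ℝ} (hc : 0 < c)
    (hdet : ∀ k, (G k).det = 1) (hG : ∀ k, 12 ≤ c ^ 2 * ‖G k‖ ^ 2)
    (hj : ∀ k, c * (‖G (k + 1)‖ * ‖G k‖) ≤ ‖G (k + 1) * G k‖)
    (hP0 : P 0 = 1) (hP : ∀ k, P (k + 1) = G k * P k) (q : ℕ) :
    (c / 4) ^ q * ∏ k ∈ range q, ‖G k‖ ≤ ‖P q‖ := by
  have : Nontrivial E := nontrivial_of_finrank_eq_succ (Fact.out : finrank ℝ E = 2)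
  have hc1 : c ≤ 1 := le_one_of_mul_norm_mul_le_norm_mul
    (zero_lt_one.trans_le (one_le_norm_of_det_eq_one (hdet 1)))
    (zero_lt_one.trans_le (one_le_norm_of_det_eq_one (hdet 0))) (hj 0)
  obtain ⟨x, hx, hGx⟩ := (G 0).exists_norm_eq_one_norm_apply_eq_opNorm
  have key : ∀ k, (c / 4) ^ k * ∏ i ∈ range k, ‖G i‖ ≤ ‖P k x‖ ∧
      c / 4 * (‖G k‖ * ‖P k x‖) ≤ ‖G k (P k x)‖ := by
    intro k
    induction k with
    | zero =>
      rw [pow_zero, range_zero, prod_empty, one_mul, hP0, one_apply_eq_self, hx, mul_one, hGx]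
      exact ⟨le_rfl, by nlinarith [norm_nonneg (G 0)]⟩
    | succ k ih =>
      rw [hP, mul_apply_eq_comp]
      refine ⟨?_, norm_apply_apply_ge_of_junction hc (hdet k) (hdet (k + 1)) (hG k) (hG (k + 1))
        (hj k) ih.2⟩
      calc (c / 4) ^ (k + 1) * ∏ i ∈ range (k + 1), ‖G i‖
          = c / 4 * ‖G k‖ * ((c / 4) ^ k * ∏ i ∈ range k, ‖G i‖) := by
            rw [prod_range_succ, pow_succ]; ring
        _ ≤ c / 4 * ‖G k‖ * ‖P k x‖ := by gcongr; exact ih.1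
        _ ≤ ‖G k (P k x)‖ := by linarith [ih.2]
  calc _ ≤ ‖P q x‖ := (key q).1
    _ ≤ ‖P q‖ := by simpa [hx] using (P q).le_opNorm x

end ContinuousLinearMap

end TwoDim

local notation "M₂" => Matrix (Fin 2) (Fin 2) ℝ

theorem Matrix.det_toEuclideanCLM {n : Type*} [Fintype n] [DecidableEq n] (A : Matrix n n ℝ) :
    (toEuclideanCLM (𝕜 := ℝ) A).det = A.det :=
  LinearMap.det_toLin _ A

open scoped EuclideanSpace

theorem one_le_norm_coe_SL2 (g : SL2) : 1 ≤ ‖(g : M₂)‖ :=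
  ContinuousLinearMap.one_le_norm_of_det_eq_one ((Matrix.det_toEuclideanCLM _).trans g.2)

theorem norm_coe_SL2_pos (g : SL2) : 0 < ‖(g : M₂)‖ :=
  zero_lt_one.trans_le (one_le_norm_coe_SL2 g)

theorem isometry_coe_SL2 : Isometry fun g : SL2 => (g : M₂) :=
  fun _ _ => rfl

section Cocycle

variable {Ω : Type*} (T : Ω → Ω) (B : Ω → SL2)

theorem coc_add (m n : ℕ) (ω : Ω) : coc T B (m + n) ω = coc T B m (T^[n] ω) * coc T B n ω := by
  induction n generalizing ω with
  | zero => simp [coc]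
  | succ n ih => rw [← add_assoc, coc, ih, Function.iterate_succ_apply, coc, mul_assoc]

theorem cocNorm_nonneg (n : ℕ) (ω : Ω) : 0 ≤ cocNorm T B n ω :=
  Real.log_nonneg (one_le_norm_coe_SL2 _)

theorem cocNorm_add_le (m n : ℕ) (ω : Ω) :
    cocNorm T B (m + n) ω ≤ cocNorm T B m (T^[n] ω) + cocNorm T B n ω := by
  rw [cocNorm, cocNorm, cocNorm, ← Real.log_mul (norm_coe_SL2_pos _).ne' (norm_coe_SL2_pos _).ne',
    coc_add]
  refine Real.log_le_log (norm_coe_SL2_pos _) ?_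
  rw [Matrix.SpecialLinearGroup.coe_mul]
  exact norm_mul_le _ _

theorem cocNorm_le_mul_log {C : ℝ} (hC : ∀ ω, ‖(B ω : M₂)‖ ≤ C) (n : ℕ)
    (ω : Ω) : cocNorm T B n ω ≤ n * Real.log C := by
  induction n generalizing ω with
  | zero => simp [cocNorm, coc]
  | succ n ih =>
    have hB : cocNorm T B 1 ω ≤ Real.log C := by
      simpa [cocNorm, coc] using Real.log_le_log (norm_coe_SL2_pos _) (hC ω)
    have := cocNorm_add_le T B n 1 ω
    push_cast
    linarith [ih (T^[1] ω)]

theorem pow_mul_prod_norm_coc_le {l : ℕ} {c : ℝ} (hc : 0 < c)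
    (hblock : ∀ ρ, 12 ≤ c ^ 2 * ‖(coc T B l ρ : M₂)‖ ^ 2)
    (hjunc : ∀ ρ, c * (‖(coc T B l (T^[l] ρ) : M₂)‖ * ‖(coc T B l ρ : M₂)‖)
      ≤ ‖(coc T B (2 * l) ρ : M₂)‖)
    (q : ℕ) (ω : Ω) :
    (c / 4) ^ q * ∏ k ∈ range q, ‖(coc T B l (T^[k * l] ω) : M₂)‖ ≤ ‖(coc T B (q * l) ω : M₂)‖ := by
  let Φ : SL2 → EuclideanSpace ℝ (Fin 2) →L[ℝ] EuclideanSpace ℝ (Fin 2) :=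
    fun g => Matrix.toEuclideanCLM (𝕜 := ℝ) (g : M₂)
  have hΦmul : ∀ g g' : SL2, Φ (g * g') = Φ g * Φ g' := fun g g' => by
    simp only [Φ, Matrix.SpecialLinearGroup.coe_mul, map_mul]
  refine ContinuousLinearMap.pow_mul_prod_norm_le_norm_of_junction
    (G := fun k => Φ (coc T B l (T^[k * l] ω))) (P := fun k => Φ (coc T B (k * l) ω)) hc
    (fun k => (Matrix.det_toEuclideanCLM _).trans (coc T B l _).2) (fun k => hblock _)
    (fun k => ?_) (by simp [Φ, coc]) (fun k => by rw [← hΦmul, ← coc_add]; ring_nf) q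
  have hiter : T^[l] (T^[k * l] ω) = T^[(k + 1) * l] ω := by
    rw [← Function.iterate_add_apply]; ring_nf
  rw [← hiter, ← hΦmul, ← coc_add, ← two_mul]
  exact hjunc _

theorem sum_cocNorm_sub_le_cocNorm_of_junction {l : ℕ} {κ : ℝ}
    (hblock : ∀ ρ, κ + 2 ≤ cocNorm T B l ρ)
    (hjunc : ∀ ρ, cocNorm T B l (T^[l] ρ) + cocNorm T B l ρ - κ ≤ cocNorm T B (2 * l) ρ)
    (q : ℕ) (ω : Ω) :
    ∑ k ∈ range q, cocNorm T B l (T^[k * l] ω) - q * (κ + 2) ≤ cocNorm T B (q * l) ω := by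
  have hnorm : ∀ n ρ, ‖(coc T B n ρ : M₂)‖ = Real.exp (cocNorm T B n ρ) := fun n ρ =>
    (Real.exp_log (norm_coe_SL2_pos _)).symm
  have hexp2 : 4 ≤ Real.exp 2 := by
    have := Real.add_one_le_exp 1
    rw [show (2 : ℝ) = 1 + 1 by norm_num, Real.exp_add]
    nlinarith
  have hchain := pow_mul_prod_norm_coc_le T B (c := Real.exp (-κ)) (Real.exp_pos _)
    (fun ρ => by
      have : 4 ≤ Real.exp (-κ) * ‖(coc T B l ρ : M₂)‖ := by
        rw [hnorm, ← Real.exp_add]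
        exact hexp2.trans (Real.exp_le_exp.mpr (by linarith [hblock ρ]))
      nlinarith)
    (fun ρ => by
      rw [hnorm, hnorm, hnorm, ← Real.exp_add, ← Real.exp_add]
      exact Real.exp_le_exp.mpr (by linarith [hjunc ρ]))
    q ω
  rw [cocNorm, Real.le_log_iff_exp_le (norm_coe_SL2_pos _)]
  calc Real.exp (∑ k ∈ range q, cocNorm T B l (T^[k * l] ω) - q * (κ + 2))
      = (Real.exp (-κ) * Real.exp (-2)) ^ q * ∏ k ∈ range q, ‖(coc T B l (T^[k * l] ω) : M₂)‖ := by
        rw [sub_eq_add_neg, Real.exp_add, Real.exp_sum, show -(q * (κ + 2)) = q * (-κ + -2) by ring,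
          Real.exp_nat_mul, Real.exp_add, mul_comm]
        simp only [hnorm]
    _ ≤ (Real.exp (-κ) / 4) ^ q * ∏ k ∈ range q, ‖(coc T B l (T^[k * l] ω) : M₂)‖ := by
        have hbase : Real.exp (-κ) * Real.exp (-2) ≤ Real.exp (-κ) / 4 := by
          rw [div_eq_mul_inv, Real.exp_neg 2]
          exact mul_le_mul_of_nonneg_left (inv_anti₀ (by norm_num) hexp2) (Real.exp_pos _).le
        exact mul_le_mul_of_nonneg_right (pow_le_pow_left₀ (by positivity) hbase q)
          (prod_nonneg fun _ _ => norm_nonneg _)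
    _ ≤ _ := hchain

end Cocycle

section Growth

variable {Ω : Type*} (T : Ω → Ω) (B : Ω → SL2)

theorem mul_sub_le_cocNorm_of_half {n l : ℕ} {L δ : ℝ} (hδ : 0 ≤ δ) (hl : 1 ≤ l) (hln : l ≤ n)
    (hn : n ≤ 2 * l + 1) (hlow : ∀ ω, n * (L - δ) ≤ cocNorm T B n ω)
    (hup : ∀ ω, cocNorm T B (n - l) ω ≤ (n - l : ℕ) * (L + δ)) (ω : Ω) :
    l * (L - 5 * δ) ≤ cocNorm T B l ω := by
  have hsub := cocNorm_add_le T B (n - l) l ω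
  rw [Nat.sub_add_cancel hln] at hsub
  have hupω := hup (T^[l] ω)
  rw [Nat.cast_sub hln] at hupω
  have hn' : (n : ℝ) ≤ 2 * l + 1 := by exact_mod_cast hn
  have hl' : (1 : ℝ) ≤ l := by exact_mod_cast hl
  nlinarith [hlow ω, mul_nonneg (by linarith : (0 : ℝ) ≤ 3 * l - n) hδ]

theorem cocNorm_add_cocNorm_sub_le_of_half {n l : ℕ} {L δ C₁ : ℝ} (hL : 0 ≤ L) (hδ : 0 ≤ δ)
    (hC₁ : 0 ≤ C₁) (hl : 1 ≤ l) (h2l : 2 * l ≤ n) (hn : n ≤ 2 * l + 1)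
    (hC : ∀ m ω, cocNorm T B m ω ≤ m * C₁) (hlow : ∀ ω, n * (L - δ) ≤ cocNorm T B n ω)
    (hup : ∀ ω, cocNorm T B l ω ≤ l * (L + δ)) (ρ : Ω) :
    cocNorm T B l (T^[l] ρ) + cocNorm T B l ρ - (5 * l * δ + C₁) ≤ cocNorm T B (2 * l) ρ := by
  have hsub := cocNorm_add_le T B (n - 2 * l) (2 * l) ρ
  rw [Nat.sub_add_cancel h2l] at hsub
  have hrest : cocNorm T B (n - 2 * l) (T^[2 * l] ρ) ≤ C₁ := by
    refine (hC _ _).trans (le_of_le_of_eq (mul_le_mul_of_nonneg_right ?_ hC₁) (one_mul C₁))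
    exact_mod_cast (by omega : n - 2 * l ≤ 1)
  have h2l' : 2 * (l : ℝ) ≤ n := by exact_mod_cast h2l
  have hn' : (n : ℝ) ≤ 2 * l + 1 := by exact_mod_cast hn
  have hl' : (1 : ℝ) ≤ l := by exact_mod_cast hl
  nlinarith [hlow ρ, hup ρ, hup (T^[l] ρ), mul_nonneg (by linarith : (0 : ℝ) ≤ n - 2 * l) hL,
    mul_nonneg (by linarith : (0 : ℝ) ≤ 3 * l - n) hδ]

theorem mul_sub_le_cocNorm_of_multiples {l : ℕ} {R C₁ : ℝ} (hl : 1 ≤ l) (hR : 0 ≤ R)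
    (hC₁ : 0 ≤ C₁) (hC : ∀ m ω, cocNorm T B m ω ≤ m * C₁)
    (hmul : ∀ q ω, ((q * l : ℕ) : ℝ) * R ≤ cocNorm T B (q * l) ω) (N : ℕ) (ω : Ω) :
    N * R - l * C₁ ≤ cocNorm T B N ω := by
  set q := N / l + 1
  have hdiv := Nat.div_add_mod N l
  have hmod := Nat.mod_lt N (by omega : 0 < l)
  have hNq : N ≤ q * l := by rw [add_mul, one_mul, mul_comm]; omega
  have hsub := cocNorm_add_le T B (q * l - N) N ω
  rw [Nat.sub_add_cancel hNq] at hsub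
  have hrest : cocNorm T B (q * l - N) (T^[N] ω) ≤ l * C₁ := by
    refine (hC _ _).trans (mul_le_mul_of_nonneg_right ?_ hC₁)
    exact_mod_cast (by rw [add_mul, one_mul, mul_comm]; omega : q * l - N ≤ l)
  have hNR : (N : ℝ) * R ≤ ((q * l : ℕ) : ℝ) * R :=
    mul_le_mul_of_nonneg_right (by exact_mod_cast hNq) hR
  linarith [hmul q ω]

theorem eventually_mul_sub_le_cocNorm {L C₁ : ℝ} (hC₁ : 0 ≤ C₁)
    (hC : ∀ n ω, cocNorm T B n ω ≤ n * C₁)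
    (hup : ∀ δ > 0, ∀ᶠ n in atTop, ∀ ω, cocNorm T B n ω ≤ n * (L + δ))
    (hfreq : ∀ δ > 0, ∃ᶠ n in atTop, ∀ ω, n * (L - δ) ≤ cocNorm T B n ω) {ε : ℝ} (hε : 0 < ε) :
    ∀ᶠ n in atTop, ∀ ω, n * (L - ε) ≤ cocNorm T B n ω := by
  rcases le_or_gt L ε with hLε | hLε
  · exact Eventually.of_forall fun n ω => (mul_nonpos_of_nonneg_of_nonpos n.cast_nonneg
      (by linarith)).trans (cocNorm_nonneg T B n ω)
  obtain ⟨δ, hδ, rfl⟩ : ∃ δ > 0, ε = 12 * δ := ⟨ε / 12, by positivity, by ring⟩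
  obtain ⟨K, hK⟩ := eventually_atTop.1 (hup δ hδ)
  obtain ⟨n, hn, hlow⟩ := frequently_atTop.1 (hfreq δ hδ) (2 * (K + ⌈(C₁ + 2) / δ⌉₊) + 2)
  set l := n / 2
  have hlδ : C₁ + 2 ≤ l * δ := by
    rw [← div_le_iff₀ hδ]
    exact (Nat.le_ceil _).trans (by exact_mod_cast (by omega : ⌈(C₁ + 2) / δ⌉₊ ≤ l))
  have hblock := mul_sub_le_cocNorm_of_half T B (n := n) (l := l) hδ.le (by omega) (by omega)
    (by omega) hlow fun ω => hK _ (by omega) ω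
  have hjunc := cocNorm_add_cocNorm_sub_le_of_half T B (by linarith) hδ.le hC₁ (by omega)
    (by omega) (by omega) hC hlow (hK l (by omega))
  have hmul : ∀ q ω, ((q * l : ℕ) : ℝ) * (L - 11 * δ) ≤ cocNorm T B (q * l) ω := by
    intro q ω
    have hgap : 0 ≤ l * (L - 12 * δ) := mul_nonneg l.cast_nonneg (by linarith)
    have hchain := sum_cocNorm_sub_le_cocNorm_of_junction T B (κ := 5 * l * δ + C₁)
      (fun ρ => by nlinarith [hblock ρ]) hjunc q ω
    have hsum : q * (l * (L - 5 * δ)) ≤ ∑ k ∈ range q, cocNorm T B l (T^[k * l] ω) := by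
      simpa using card_nsmul_le_sum (range q) _ _ fun k _ => hblock (T^[k * l] ω)
    push_cast
    nlinarith [mul_le_mul_of_nonneg_left hlδ (q.cast_nonneg : (0 : ℝ) ≤ q)]
  filter_upwards [eventually_ge_atTop ⌈l * C₁ / δ⌉₊] with N hN ω
  have hlC : l * C₁ ≤ N * δ := by
    rw [← div_le_iff₀ hδ]
    exact (Nat.le_ceil _).trans (by exact_mod_cast hN)
  linarith [mul_sub_le_cocNorm_of_multiples T B (by omega) (by linarith) hC₁ hC hmul N ω]

theorem tendsUniformlyToConst_of_eventually {L : ℝ}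
    (hup : ∀ ε > 0, ∀ᶠ n in atTop, ∀ ω, cocNorm T B n ω ≤ n * (L + ε))
    (hlow : ∀ ε > 0, ∀ᶠ n in atTop, ∀ ω, n * (L - ε) ≤ cocNorm T B n ω) :
    TendsUniformlyToConst T B L := by
  intro ε hε
  obtain ⟨N, hN⟩ := eventually_atTop.1 ((hup (ε / 2) (by positivity)).and
    ((hlow (ε / 2) (by positivity)).and (eventually_ge_atTop 1)))
  refine ⟨N, fun n hn ω => ?_⟩
  obtain ⟨hupn, hlown, hn1⟩ := hN n hn
  have hn0 : (0 : ℝ) < n := by exact_mod_cast hn1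
  rw [one_div, inv_mul_eq_div, abs_sub_lt_iff, sub_lt_iff_lt_add', div_lt_iff₀ hn0, sub_lt_comm,
    lt_div_iff₀ hn0]
  constructor <;> nlinarith [hupn ω, hlown ω]

theorem subadditive_iSup_cocNorm [Nonempty Ω] (hbdd : ∀ n, BddAbove (Set.range (cocNorm T B n))) :
    Subadditive fun n => ⨆ ω, cocNorm T B n ω := fun m n =>
  ciSup_le fun ω => (cocNorm_add_le T B m n ω).trans
    (add_le_add (le_ciSup (hbdd m) _) (le_ciSup (hbdd n) ω))

theorem isUniformCocycle_of_frequently_small_variation {C : ℝ}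
    (hC : ∀ ω, ‖(B ω : M₂)‖ ≤ C)
    (hV : ∀ δ > (0 : ℝ), ∀ N : ℕ, ∃ n ≥ N, ∀ ω ϱ,
      (1 / n : ℝ) * |cocNorm T B n ω - cocNorm T B n ϱ| < δ) :
    IsUniformCocycle T B := by
  rcases isEmpty_or_nonempty Ω with hΩ | hΩ
  · exact ⟨0, fun ε _ => ⟨0, fun n _ ω => isEmptyElim ω⟩⟩
  have ω₀ : Ω := hΩ.some
  have hC₁ : 0 ≤ Real.log C := Real.log_nonneg ((one_le_norm_coe_SL2 _).trans (hC ω₀))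
  have hCn := cocNorm_le_mul_log T B hC
  have hbdd : ∀ n, BddAbove (Set.range (cocNorm T B n)) := fun n =>
    ⟨n * Real.log C, Set.forall_mem_range.2 (hCn n)⟩
  set a := fun n => ⨆ ω, cocNorm T B n ω
  have hfa : ∀ n ω, cocNorm T B n ω ≤ a n := fun n ω => le_ciSup (hbdd n) ω
  have hsub : Subadditive a := subadditive_iSup_cocNorm T B hbdd
  have hbelow : BddBelow (Set.range fun n => a n / n) := ⟨0, Set.forall_mem_range.2 fun n =>
    div_nonneg ((cocNorm_nonneg T B n ω₀).trans (hfa n ω₀)) n.cast_nonneg⟩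
  have hup : ∀ ε > 0, ∀ᶠ n in atTop, ∀ ω, cocNorm T B n ω ≤ n * (hsub.lim + ε) := by
    intro ε hε
    filter_upwards [(hsub.tendsto_lim hbelow).eventually (gt_mem_nhds (lt_add_of_pos_right _ hε)),
      eventually_ge_atTop 1] with n hn hn1 ω
    have hn0 : (0 : ℝ) < n := by exact_mod_cast hn1
    rw [div_lt_iff₀ hn0] at hn
    linarith [hfa n ω]
  have hfreq : ∀ δ > 0, ∃ᶠ n in atTop, ∀ ω, n * (hsub.lim - δ) ≤ cocNorm T B n ω := by
    intro δ hδ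
    refine frequently_atTop.2 fun N => ?_
    obtain ⟨n, hn, hvar⟩ := hV δ hδ (max N 1)
    have hn0 : (0 : ℝ) < n := by exact_mod_cast (le_of_max_le_right hn)
    refine ⟨n, le_of_max_le_left hn, fun ω => ?_⟩
    have hlim := hsub.lim_le_div hbelow (by omega : n ≠ 0)
    rw [le_div_iff₀ hn0] at hlim
    have hsup : a n ≤ cocNorm T B n ω + n * δ := ciSup_le fun ϱ => by
      have := hvar ϱ ω
      rw [one_div, inv_mul_eq_div, div_lt_iff₀ hn0] at this
      linarith [le_abs_self (cocNorm T B n ϱ - cocNorm T B n ω)]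
    linarith
  exact ⟨hsub.lim, tendsUniformlyToConst_of_eventually T B hup fun ε hε =>
    eventually_mul_sub_le_cocNorm T B hC₁ hCn hup hfreq hε⟩

end Growth

theorem prop_inclusion_two_general {Ω : Type*} [MetricSpace Ω] [CompactSpace Ω]
    (T : Ω ≃ₜ Ω) (I : Set ℝ)
    (A : C(I × Ω, SL2))
    (hV : ∀ δ > (0 : ℝ), ∀ N : ℕ, ∃ n ≥ N, ∀ (E : I) (ω ϱ : Ω),
      (1 / n : ℝ) * |cocNorm (⇑T) (fun ω' => A (E, ω')) n ω
        - cocNorm (⇑T) (fun ω' => A (E, ω')) n ϱ| < δ) :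
    ∀ E : I, IsUniformCocycle (⇑T) (fun ω => A (E, ω)) := by
  intro E
  have hcont : Continuous fun ω => ‖(A (E, ω) : M₂)‖ :=
    (isometry_coe_SL2.continuous.comp (A.continuous.comp (Continuous.prodMk_right E))).norm
  obtain ⟨C, hC⟩ := (isCompact_range hcont).bddAbove
  exact isUniformCocycle_of_frequently_small_variation (⇑T) _ (fun ω => hC ⟨ω, rfl⟩)
    fun δ hδ N => (hV δ hδ N).imp fun n ⟨hn, hvar⟩ => ⟨hn, hvar E⟩

/-- Proposition 4.4: if `liminf (1/n) Var_n(A) = 0`, where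
`Var_n(A) = sup_{E,ω,ϱ} |log‖A_n(E,ω)‖ - log‖A_n(E,ϱ)‖|`, then `A(E,·)` is
uniform for every `E ∈ I`. -/
theorem prop_inclusion_two {Ω : Type*} [MetricSpace Ω] [CompactSpace Ω]
    (T : Ω ≃ₜ Ω) (I : Set ℝ) (hIc : IsCompact I) (hI : I.OrdConnected)
    (A : C(I × Ω, SL2))
    (hV : ∀ δ > (0 : ℝ), ∀ N : ℕ, ∃ n ≥ N, ∀ (E : I) (ω ϱ : Ω),
      (1 / n : ℝ) * |cocNorm (⇑T) (fun ω' => A (E, ω')) n ω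
        - cocNorm (⇑T) (fun ω' => A (E, ω')) n ϱ| < δ) :
    ∀ E : I, IsUniformCocycle (⇑T) (fun ω => A (E, ω)) :=
  prop_inclusion_two_general T I A hV
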